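/- arXiv:1701.00424 — 3 statements merged into one kernel-verified Lean document; each statement's English description precedes it below -/
import Mathlib

section
/- Let n, m be positive integers and let Ā be an (n+m)×(n+m) real matrix of block form Ā = [[A, Ã],[0, I]] with A of size n×n, Ã of size n×m, 0 the m×n zero matrix and I the m×m identity. Assume: (i) Ā_{ij} ≤ 0 for all 1 ≤ i ≤ n and 1 ≤ j ≤ n+m with i ≠ j; (ii) ∑_{j=1}^{n+m} Ā_{ij} ≥ 0 for all 1 ≤ i ≤ n; (iii) A is positive definite. Then for every vector c̄ ∈ ℝ^{n+m} with (Ā c̄)_i ≤ 0 for all 1 ≤ i ≤ n, one has max_{1 ≤ i ≤ n+m} c̄_i ≤ max{0, max_{n+1 ≤ i ≤ n+m} c̄_i}. -/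
/-!
Subtract `M = max 0 (max of c on the boundary)`: since the row sums are nonnegative and `M ≥ 0`,
`d = c - M` still satisfies `(Ā d)_i ≤ 0` at interior nodes, and `d ≤ 0` on the boundary.
Because the off-diagonal entries are nonpositive, the positive part `x = (d|interior)⁺` satisfies
`(A x)_i ≤ (Ā d)_i ≤ 0` wherever `x_i > 0`, so `xᵀ A x ≤ 0`; positive definiteness forces `x = 0`.
-/

open Matrix

section ZMatrix

variable {ι : Type*} [Fintype ι] {A : Matrix ι ι ℝ}

theorem mulVec_posPart_le_of_pos (hA : ∀ i j, i ≠ j → A i j ≤ 0) {y : ι → ℝ} {i : ι}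
    (hi : 0 < y i) : (A *ᵥ y⁺) i ≤ (A *ᵥ y) i := by
  simp only [mulVec, dotProduct]
  refine Finset.sum_le_sum fun j _ => ?_
  rcases eq_or_ne i j with rfl | hij
  · rw [Pi.posPart_apply, posPart_eq_self.2 hi.le]
  · exact mul_le_mul_of_nonpos_left (le_posPart _) (hA i j hij)

theorem posPart_dotProduct_mulVec_posPart_nonpos (hA : ∀ i j, i ≠ j → A i j ≤ 0)
    {y : ι → ℝ} (hy : ∀ i, 0 < y i → (A *ᵥ y) i ≤ 0) : y⁺ ⬝ᵥ A *ᵥ y⁺ ≤ 0 := by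
  refine Finset.sum_nonpos fun i _ => ?_
  rcases le_or_gt (y i) 0 with hi | hi
  · simp [posPart_eq_zero.2 hi]
  · exact mul_nonpos_of_nonneg_of_nonpos (posPart_nonneg _)
      ((mulVec_posPart_le_of_pos hA hi).trans (hy i hi))

theorem nonpos_of_mulVec_nonpos_of_pos (hA : ∀ i j, i ≠ j → A i j ≤ 0)
    (hpos : ∀ x : ι → ℝ, x ≠ 0 → 0 < x ⬝ᵥ A *ᵥ x) {y : ι → ℝ}
    (hy : ∀ i, 0 < y i → (A *ᵥ y) i ≤ 0) : y ≤ 0 := by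
  refine posPart_eq_zero.1 (not_not.1 fun hne => ?_)
  exact (hpos _ hne).not_ge (posPart_dotProduct_mulVec_posPart_nonpos hA hy)

end ZMatrix

section Blocks

variable {ι κ ρ : Type*} [Fintype ι] [Fintype κ]

theorem mulVec_sub_const_le {A : Matrix ρ ι ℝ} {r : ρ} (hrow : 0 ≤ ∑ j, A r j) (c : ι → ℝ)
    {M : ℝ} (hM : 0 ≤ M) : (A *ᵥ (c - fun _ => M)) r ≤ (A *ᵥ c) r := by
  have hconst : (A *ᵥ fun _ => M) r = (∑ j, A r j) * M := by
    simp only [mulVec, dotProduct, Finset.sum_mul]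
  rw [mulVec_sub, Pi.sub_apply, hconst]
  linarith [mul_nonneg hrow hM]

theorem toBlocks₁₁_mulVec_le {A : Matrix (ι ⊕ κ) (ι ⊕ κ) ℝ} {i : ι}
    (hA : ∀ j, A (Sum.inl i) (Sum.inr j) ≤ 0) {d : ι ⊕ κ → ℝ} (hd : ∀ j, d (Sum.inr j) ≤ 0) :
    (A.toBlocks₁₁ *ᵥ (d ∘ Sum.inl)) i ≤ (A *ᵥ d) (Sum.inl i) := by
  simp only [mulVec, dotProduct, Fintype.sum_sum_type]
  exact le_add_of_nonneg_right
    (Finset.sum_nonneg fun j _ => mul_nonneg_of_nonpos_of_nonpos (hA j) (hd j))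

end Blocks

theorem discrete_weak_maximum_principle_general {n m : ℕ}
    (A : Matrix (Fin n ⊕ Fin m) (Fin n ⊕ Fin m) ℝ)
    (hoffdiag : ∀ (i : Fin n) (j : Fin n ⊕ Fin m),
      Sum.inl i ≠ j → A (Sum.inl i) j ≤ 0)
    (hrowsum : ∀ i : Fin n, 0 ≤ ∑ j, A (Sum.inl i) j)
    (hposdef : ∀ x : Fin n → ℝ, x ≠ 0 →
      0 < ∑ i, ∑ j, x i * A (Sum.inl i) (Sum.inl j) * x j)
    (c : Fin n ⊕ Fin m → ℝ)
    (hc : ∀ i : Fin n, (A.mulVec c) (Sum.inl i) ≤ 0) :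
    ∀ k : Fin n ⊕ Fin m, c k ≤ max 0 (⨆ i : Fin m, c (Sum.inr i)) := by
  set M := max 0 (⨆ i : Fin m, c (Sum.inr i))
  have hboundary (j : Fin m) : c (Sum.inr j) ≤ M :=
    (le_ciSup (f := fun i => c (Sum.inr i)) (Set.finite_range _).bddAbove j).trans (le_max_right _ _)
  have hinterior : (c - fun _ => M) ∘ Sum.inl ≤ 0 := by
    refine nonpos_of_mulVec_nonpos_of_pos (A := A.toBlocks₁₁)
      (fun i j hij => hoffdiag i _ (Sum.inl_injective.ne hij))
      (fun x hx => by rw [← toBilin'_apply', toBilin'_apply]; exact hposdef x hx)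
      (fun i _ => ?_)
    exact (toBlocks₁₁_mulVec_le (fun j => hoffdiag i _ Sum.inl_ne_inr)
      (fun j => sub_nonpos.2 (hboundary j))).trans
      ((mulVec_sub_const_le (hrowsum i) c (le_max_left _ _)).trans (hc i))
  rintro (i | j)
  · exact sub_nonpos.1 (hinterior i)
  · exact hboundary j

/-- discrete weak maximum principle (DwMP). Indices `Sum.inl` are the
`n` interior nodes, `Sum.inr` the `m` boundary nodes. The block structure
`Ā = [[A, Ã],[0, I]]` is expressed by the identity rows for boundary indices. -/
theorem discrete_weak_maximum_principle {n m : ℕ} (hn : 0 < n) (hm : 0 < m)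
    (A : Matrix (Fin n ⊕ Fin m) (Fin n ⊕ Fin m) ℝ)
    (hblock : ∀ (i : Fin m) (j : Fin n ⊕ Fin m),
      A (Sum.inr i) j = if Sum.inr i = j then 1 else 0)
    (hoffdiag : ∀ (i : Fin n) (j : Fin n ⊕ Fin m),
      Sum.inl i ≠ j → A (Sum.inl i) j ≤ 0)
    (hrowsum : ∀ i : Fin n, 0 ≤ ∑ j, A (Sum.inl i) j)
    (hposdef : ∀ x : Fin n → ℝ, x ≠ 0 →
      0 < ∑ i, ∑ j, x i * A (Sum.inl i) (Sum.inl j) * x j)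
    (c : Fin n ⊕ Fin m → ℝ)
    (hc : ∀ i : Fin n, (A.mulVec c) (Sum.inl i) ≤ 0) :
    ∀ k : Fin n ⊕ Fin m, c k ≤ max 0 (⨆ i : Fin m, c (Sum.inr i)) :=
  discrete_weak_maximum_principle_general A hoffdiag hrowsum hposdef c hc
end

section
/- Let Ā = [[A, Ã],[0, I]] be an (n+m)×(n+m) real matrix satisfying: (i) Ā_{ij} ≤ 0 for all 1 ≤ i ≤ n, j ≠ i; (ii) ∑_{j=1}^{n+m} Ā_{ij} = 0 for all 1 ≤ i ≤ n; (iii) A positive definite. Then for every c̄ ∈ ℝ^{n+m} with (Ā c̄)_i ≤ 0 for 1 ≤ i ≤ n, one has max_{1 ≤ i ≤ n+m} c̄_i = max_{n+1 ≤ i ≤ n+m} c̄_i. -/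
/-!
Shift `c` by the boundary maximum `M` and let `x` be the positive part of the shifted interior
values. On every row where `x i > 0`, the sign conditions on `A` give
`∑ j, A i j * x j ≤ (A *ᵥ (c - M)) i = (A *ᵥ c) i ≤ 0`, so the quadratic form of the interior
block at `x` is nonpositive; positive definiteness then forces `x = 0`, i.e. `c ≤ M` inside.
-/

open Matrix

namespace Matrix

variable {ι κ : Type*} [Fintype ι] [Fintype κ] {A : Matrix (ι ⊕ κ) (ι ⊕ κ) ℝ}

theorem mulVec_sub_const_inl_of_rowSum_eq_zero (hrowsum : ∀ i, ∑ j, A (.inl i) j = 0)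
    (c : ι ⊕ κ → ℝ) (M : ℝ) (i : ι) :
    (A *ᵥ fun k => c k - M) (.inl i) = (A *ᵥ c) (.inl i) := by
  simp only [mulVec, dotProduct, mul_sub, Finset.sum_sub_distrib, ← Finset.sum_mul, hrowsum,
    zero_mul, sub_zero]

theorem sum_mul_posPart_le_mulVec_inl
    (hoffdiag : ∀ i j, .inl i ≠ j → A (.inl i) j ≤ 0)
    {d : ι ⊕ κ → ℝ} (hbdry : ∀ j, d (.inr j) ≤ 0) {i : ι} (hi : 0 ≤ d (.inl i)) :
    ∑ j, A (.inl i) (.inl j) * max (d (.inl j)) 0 ≤ (A *ᵥ d) (.inl i) := by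
  have hinterior : ∑ j, A (.inl i) (.inl j) * max (d (.inl j)) 0 ≤
      ∑ j, A (.inl i) (.inl j) * d (.inl j) := by
    refine Finset.sum_le_sum fun j _ => ?_
    by_cases hji : j = i
    · rw [hji, max_eq_left hi]
    · exact mul_le_mul_of_nonpos_left (le_max_left _ _)
        (hoffdiag i _ (Sum.inl_injective.ne (Ne.symm hji)))
  have hboundary : 0 ≤ ∑ j, A (.inl i) (.inr j) * d (.inr j) :=
    Finset.sum_nonneg fun j _ => mul_nonneg_of_nonpos_of_nonpos (hoffdiag i _ Sum.inl_ne_inr)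
      (hbdry j)
  rw [mulVec, dotProduct, Fintype.sum_sum_type]
  linarith

theorem inl_nonpos_of_mulVec_inl_nonpos
    (hoffdiag : ∀ i j, .inl i ≠ j → A (.inl i) j ≤ 0)
    (hposdef : ∀ x : ι → ℝ, x ≠ 0 → 0 < ∑ i, ∑ j, x i * A (.inl i) (.inl j) * x j)
    {d : ι ⊕ κ → ℝ} (hbdry : ∀ j, d (.inr j) ≤ 0) (hd : ∀ i, (A *ᵥ d) (.inl i) ≤ 0) (i : ι) :
    d (.inl i) ≤ 0 := by
  set x : ι → ℝ := fun i => max (d (.inl i)) 0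
  have hrow : ∀ i, x i * ∑ j, A (.inl i) (.inl j) * x j ≤ 0 := by
    intro i
    rcases le_total (d (.inl i)) 0 with hi | hi
    · simp [x, max_eq_right hi]
    · exact mul_nonpos_of_nonneg_of_nonpos (le_max_right _ _)
        ((sum_mul_posPart_le_mulVec_inl hoffdiag hbdry hi).trans (hd i))
  have hquad : ∑ i, ∑ j, x i * A (.inl i) (.inl j) * x j ≤ 0 := by
    refine Finset.sum_nonpos fun i _ => ?_
    simpa only [Finset.mul_sum, mul_assoc] using hrow i
  have hx : x = 0 := by
    by_contra hx
    exact (hposdef x hx).not_ge hquad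
  simpa [x] using congrFun hx i

end Matrix

theorem discrete_strict_weak_maximum_principle_general {n m : ℕ} (hm : 0 < m)
    (A : Matrix (Fin n ⊕ Fin m) (Fin n ⊕ Fin m) ℝ)
    (hoffdiag : ∀ (i : Fin n) (j : Fin n ⊕ Fin m),
      Sum.inl i ≠ j → A (Sum.inl i) j ≤ 0)
    (hrowsum : ∀ i : Fin n, ∑ j, A (Sum.inl i) j = 0)
    (hposdef : ∀ x : Fin n → ℝ, x ≠ 0 →
      0 < ∑ i, ∑ j, x i * A (Sum.inl i) (Sum.inl j) * x j)
    (c : Fin n ⊕ Fin m → ℝ)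
    (hc : ∀ i : Fin n, (A.mulVec c) (Sum.inl i) ≤ 0) :
    (⨆ k : Fin n ⊕ Fin m, c k) = ⨆ i : Fin m, c (Sum.inr i) := by
  have : Nonempty (Fin m) := ⟨⟨0, hm⟩⟩
  set M := ⨆ i : Fin m, c (Sum.inr i)
  have hbdry : ∀ j, c (Sum.inr j) ≤ M := le_ciSup (Set.finite_range _).bddAbove
  have hinterior : ∀ i, c (Sum.inl i) ≤ M := fun i => sub_nonpos.mp <|
    inl_nonpos_of_mulVec_inl_nonpos hoffdiag hposdef (fun j => sub_nonpos.mpr (hbdry j))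
      (fun i => (mulVec_sub_const_inl_of_rowSum_eq_zero hrowsum c M i).trans_le (hc i)) i
  refine le_antisymm (ciSup_le (Sum.forall.mpr ⟨hinterior, hbdry⟩)) (ciSup_le fun j => ?_)
  exact le_ciSup (f := c) (Set.finite_range _).bddAbove (Sum.inr j)

/-- discrete strict weak maximum principle (DWMP): with zero interior
row sums, the maximum of the solution vector is attained at a boundary index. -/
theorem discrete_strict_weak_maximum_principle {n m : ℕ} (hn : 0 < n) (hm : 0 < m)
    (A : Matrix (Fin n ⊕ Fin m) (Fin n ⊕ Fin m) ℝ)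
    (hblock : ∀ (i : Fin m) (j : Fin n ⊕ Fin m),
      A (Sum.inr i) j = if Sum.inr i = j then 1 else 0)
    (hoffdiag : ∀ (i : Fin n) (j : Fin n ⊕ Fin m),
      Sum.inl i ≠ j → A (Sum.inl i) j ≤ 0)
    (hrowsum : ∀ i : Fin n, ∑ j, A (Sum.inl i) j = 0)
    (hposdef : ∀ x : Fin n → ℝ, x ≠ 0 →
      0 < ∑ i, ∑ j, x i * A (Sum.inl i) (Sum.inl j) * x j)
    (c : Fin n ⊕ Fin m → ℝ)
    (hc : ∀ i : Fin n, (A.mulVec c) (Sum.inl i) ≤ 0) :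
    (⨆ k : Fin n ⊕ Fin m, c k) = ⨆ i : Fin m, c (Sum.inr i) :=
  discrete_strict_weak_maximum_principle_general hm A hoffdiag hrowsum hposdef c hc
end

section
/- Under the hypotheses of the DwMP matrix theorem (Ā = [[A, Ã],[0, I]] with off-diagonal entries of the first n rows nonpositive, nonnegative row sums for the first n rows, and A positive definite), if c̄ ∈ ℝ^{n+m} satisfies (Ā c̄)_i ≥ 0 for all 1 ≤ i ≤ n, then min_{1 ≤ i ≤ n+m} c̄_i ≥ min{0, min_{n+1 ≤ i ≤ n+m} c̄_i}. -/
/-!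
Shifting by `b = min 0 (min of the boundary values)` keeps the interior rows of `Ā c̄` nonnegative,
because the interior row sums are nonnegative and `b ≤ 0`; so it suffices to show that
`Ā y ≥ 0` on the interior and `y ≥ 0` on the boundary force `y ≥ 0`. For that, let `x` be the
negative part `min y 0` on the interior. Where `x i < 0`, the nonpositive off-diagonal entries give
`(A x)_i ≥ (Ā y)_i ≥ 0`, so `xᵀ A x ≤ 0`, and positive definiteness of `A` forces `x = 0`.
-/

open Matrix

namespace Matrix

variable {ι κ R : Type*} [Fintype ι] [Fintype κ]

theorem mulVec_sub_const_inl [Ring R] (A : Matrix (ι ⊕ κ) (ι ⊕ κ) R) (c : ι ⊕ κ → R) (b : R)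
    (i : ι) :
    (A *ᵥ (c - fun _ => b)) (Sum.inl i) = (A *ᵥ c) (Sum.inl i) - (∑ j, A (Sum.inl i) j) * b := by
  simp only [mulVec, dotProduct, Pi.sub_apply, mul_sub, Finset.sum_sub_distrib, Finset.sum_mul]

variable [Ring R] [LinearOrder R] [IsOrderedRing R]

theorem dotProduct_mulVec_nonpos_of_nonpos (B : Matrix ι ι R) {x : ι → R} (hx : ∀ i, x i ≤ 0)
    (hBx : ∀ i, x i < 0 → 0 ≤ (B *ᵥ x) i) : x ⬝ᵥ (B *ᵥ x) ≤ 0 :=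
  Finset.sum_nonpos fun i _ => by
    rcases (hx i).lt_or_eq with hneg | hzero
    · exact mul_nonpos_of_nonpos_of_nonneg (hx i) (hBx i hneg)
    · simp [hzero]

theorem mulVec_inl_le_toBlocks₁₁_mulVec_min_zero (A : Matrix (ι ⊕ κ) (ι ⊕ κ) R)
    (hoffdiag : ∀ i j, Sum.inl i ≠ j → A (Sum.inl i) j ≤ 0) {y : ι ⊕ κ → R}
    (hbdry : ∀ k, 0 ≤ y (Sum.inr k)) {i : ι} (hi : y (Sum.inl i) < 0) :
    (A *ᵥ y) (Sum.inl i) ≤ (A.toBlocks₁₁ *ᵥ fun j => min (y (Sum.inl j)) 0) i := by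
  have hbdry_terms : ∑ k, A (Sum.inl i) (Sum.inr k) * y (Sum.inr k) ≤ 0 :=
    Finset.sum_nonpos fun k _ =>
      mul_nonpos_of_nonpos_of_nonneg (hoffdiag i _ Sum.inl_ne_inr) (hbdry k)
  have hinterior_terms : ∀ j, A (Sum.inl i) (Sum.inl j) * y (Sum.inl j) ≤
      A (Sum.inl i) (Sum.inl j) * min (y (Sum.inl j)) 0 := by
    intro j
    rcases eq_or_ne j i with rfl | hji
    · rw [min_eq_left hi.le]
    · exact mul_le_mul_of_nonpos_left (min_le_left _ _)
        (hoffdiag i _ (Sum.inl_injective.ne hji.symm))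
  calc (A *ᵥ y) (Sum.inl i)
      = ∑ j, A (Sum.inl i) (Sum.inl j) * y (Sum.inl j)
        + ∑ k, A (Sum.inl i) (Sum.inr k) * y (Sum.inr k) := Fintype.sum_sum_type _
    _ ≤ ∑ j, A (Sum.inl i) (Sum.inl j) * min (y (Sum.inl j)) 0 :=
      add_le_of_le_of_nonpos (Finset.sum_le_sum fun j _ => hinterior_terms j) hbdry_terms
    _ = (A.toBlocks₁₁ *ᵥ fun j => min (y (Sum.inl j)) 0) i := rfl

theorem inl_nonneg_of_mulVec_inl_nonneg (A : Matrix (ι ⊕ κ) (ι ⊕ κ) R)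
    (hoffdiag : ∀ i j, Sum.inl i ≠ j → A (Sum.inl i) j ≤ 0)
    (hposdef : ∀ x : ι → R, x ≠ 0 → 0 < x ⬝ᵥ (A.toBlocks₁₁ *ᵥ x)) {y : ι ⊕ κ → R}
    (hbdry : ∀ k, 0 ≤ y (Sum.inr k)) (hy : ∀ i, 0 ≤ (A *ᵥ y) (Sum.inl i)) (i : ι) :
    0 ≤ y (Sum.inl i) := by
  set x : ι → R := fun j => min (y (Sum.inl j)) 0
  have hx : x = 0 := by
    by_contra hx
    refine (hposdef x hx).not_ge (dotProduct_mulVec_nonpos_of_nonpos _ (fun j => min_le_right _ _)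
      fun j hj => ?_)
    exact (hy j).trans (mulVec_inl_le_toBlocks₁₁_mulVec_min_zero A hoffdiag hbdry
      (min_lt_iff.mp hj |>.resolve_right (lt_irrefl 0)))
  exact min_eq_right_iff.mp (congrFun hx i)

end Matrix

theorem discrete_minimum_principle_general {n m : ℕ}
    (A : Matrix (Fin n ⊕ Fin m) (Fin n ⊕ Fin m) ℝ)
    (hoffdiag : ∀ (i : Fin n) (j : Fin n ⊕ Fin m),
      Sum.inl i ≠ j → A (Sum.inl i) j ≤ 0)
    (hrowsum : ∀ i : Fin n, 0 ≤ ∑ j, A (Sum.inl i) j)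
    (hposdef : ∀ x : Fin n → ℝ, x ≠ 0 →
      0 < ∑ i, ∑ j, x i * A (Sum.inl i) (Sum.inl j) * x j)
    (c : Fin n ⊕ Fin m → ℝ)
    (hc : ∀ i : Fin n, 0 ≤ (A.mulVec c) (Sum.inl i)) :
    ∀ k : Fin n ⊕ Fin m, min 0 (⨅ i : Fin m, c (Sum.inr i)) ≤ c k := by
  set b := min 0 (⨅ i : Fin m, c (Sum.inr i))
  have hb_bdry : ∀ k, b ≤ c (Sum.inr k) := fun k =>
    (min_le_right _ _).trans (ciInf_le (Set.finite_range _).bddBelow k)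
  have hposdef' : ∀ x : Fin n → ℝ, x ≠ 0 → 0 < x ⬝ᵥ (A.toBlocks₁₁ *ᵥ x) := fun x hx => by
    simpa [dotProduct, mulVec, toBlocks₁₁, Finset.mul_sum, mul_assoc] using hposdef x hx
  have hshift : ∀ i, 0 ≤ (A *ᵥ (c - fun _ => b)) (Sum.inl i) := fun i => by
    rw [mulVec_sub_const_inl, sub_nonneg]
    exact (mul_nonpos_of_nonneg_of_nonpos (hrowsum i) (min_le_left _ _)).trans (hc i)
  rintro (i | k)
  · exact sub_nonneg.mp (inl_nonneg_of_mulVec_inl_nonneg A hoffdiag hposdef'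
      (fun k => sub_nonneg.mpr (hb_bdry k)) hshift i)
  · exact hb_bdry k

/-- discrete minimum principle, from the DwMP matrix hypotheses:
if `(Āc)_i ≥ 0` on interior rows then
`min_k c_k ≥ min{0, min over boundary indices of c}`. -/
theorem discrete_minimum_principle {n m : ℕ} (hn : 0 < n) (hm : 0 < m)
    (A : Matrix (Fin n ⊕ Fin m) (Fin n ⊕ Fin m) ℝ)
    (hblock : ∀ (i : Fin m) (j : Fin n ⊕ Fin m),
      A (Sum.inr i) j = if Sum.inr i = j then 1 else 0)
    (hoffdiag : ∀ (i : Fin n) (j : Fin n ⊕ Fin m),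
      Sum.inl i ≠ j → A (Sum.inl i) j ≤ 0)
    (hrowsum : ∀ i : Fin n, 0 ≤ ∑ j, A (Sum.inl i) j)
    (hposdef : ∀ x : Fin n → ℝ, x ≠ 0 →
      0 < ∑ i, ∑ j, x i * A (Sum.inl i) (Sum.inl j) * x j)
    (c : Fin n ⊕ Fin m → ℝ)
    (hc : ∀ i : Fin n, 0 ≤ (A.mulVec c) (Sum.inl i)) :
    ∀ k : Fin n ⊕ Fin m, min 0 (⨅ i : Fin m, c (Sum.inr i)) ≤ c k :=
  discrete_minimum_principle_general A hoffdiag hrowsum hposdef c hc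
end
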